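/- arXiv:2010.01420 — 2 statements merged into one kernel-verified Lean document; each statement's English description precedes it below -/
import Mathlib

section
/- Let M be a set of m ≥ 2 items, U ⊆ M, v a monotone valuation on M with v(∅) = 0, ψ > 0 a real with v(U) ≤ ψ, and α ≥ 1 a real. Suppose there exist a probability distribution λ over subsets of U and nonnegative prices q*_e (e ∈ U) such that for every T ⊆ U: Σ_{S⊆U} λ_S·(v(S \ T) − q*(S)) ≥ (1/α)·v(U) − q*(T). Then there exist a probability distribution λ' over subsets of U and prices q_e ∈ B (e ∈ U) such that for every T ⊆ U: Σ_{S⊆U} λ'_S·(v(S \ T) − q(S)) ≥ (1/α)·v(U) − 2·q(T) − ψ/m². -/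
open Finset

/-- Sum of the prices of the items in `S`. -/
def priceOf {ι : Type} [DecidableEq ι] (p : ι → ℝ) (S : Finset ι) : ℝ := ∑ e ∈ S, p e

/-- The candidate price set `B = {0} ∪ {2^(j-K)·ψ : j = 0,…,K-1}` where `K = 3⌈log₂ m⌉`. -/
def candB (m : ℕ) (ψ : ℝ) : Set ℝ :=
  insert 0 {x : ℝ | ∃ j < 3 * Nat.clog 2 m, x = 2 ^ j * ψ / 2 ^ (3 * Nat.clog 2 m)}

/-- **Observation 3.1** (rounding of good prices to the candidate prices).  Items are the
elements of the finite type `ι` (so `M = univ` and `m = card ι ≥ 2`), `U ⊆ M`, `v` is a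
monotone valuation with `v ∅ = 0`, `ψ > 0` satisfies `v U ≤ ψ`, and `α ≥ 1`.  If a
probability distribution `lam` over subsets of `U` and nonnegative prices `qstar`
satisfy `Σ_S lam_S·(v(S\T) − q*(S)) ≥ (1/α)·v(U) − q*(T)` for every `T ⊆ U`, then there
are a probability distribution `lam'` over subsets of `U` and prices `q e ∈ B` with
`Σ_S lam'_S·(v(S\T) − q(S)) ≥ (1/α)·v(U) − 2·q(T) − ψ/m²` for every `T ⊆ U`. -/
theorem candidate_prices_good
    {ι : Type} [Fintype ι] [DecidableEq ι]
    (v : Finset ι → ℝ) (U : Finset ι) (ψ α : ℝ)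
    (hm : 2 ≤ Fintype.card ι)
    (hv0 : v ∅ = 0)
    (hmono : ∀ S T : Finset ι, S ⊆ T → v S ≤ v T)
    (hψpos : 0 < ψ) (hvU : v U ≤ ψ) (hα : 1 ≤ α)
    (lam : Finset ι → ℝ) (qstar : ι → ℝ)
    (hlam0 : ∀ S, 0 ≤ lam S) (hlam1 : ∑ S ∈ U.powerset, lam S = 1)
    (hq0 : ∀ e ∈ U, 0 ≤ qstar e)
    (hineq : ∀ T ⊆ U, (1 / α) * v U - priceOf qstar T ≤
      ∑ S ∈ U.powerset, lam S * (v (S \ T) - priceOf qstar S)) :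
    ∃ (lam' : Finset ι → ℝ) (q : ι → ℝ),
      (∀ S, 0 ≤ lam' S) ∧ (∑ S ∈ U.powerset, lam' S = 1) ∧
      (∀ e ∈ U, q e ∈ candB (Fintype.card ι) ψ) ∧
      ∀ T ⊆ U, (1 / α) * v U - 2 * priceOf q T - ψ / (Fintype.card ι : ℝ) ^ 2 ≤
        ∑ S ∈ U.powerset, lam' S * (v (S \ T) - priceOf q S) := by
  classical
  have hvnn : ∀ S : Finset ι, 0 ≤ v S := fun S => hv0 ▸ hmono ∅ S (Finset.empty_subset S)
  set m := Fintype.card ι with hmdef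
  set K := 3 * Nat.clog 2 m with hKdef
  have hKpos : 0 < K := by
    have : 0 < Nat.clog 2 m := Nat.clog_pos one_lt_two hm
    omega
  have hmR : (2:ℝ) ≤ (m:ℝ) := by exact_mod_cast hm
  have hmpos : (0:ℝ) < (m:ℝ) := by linarith
  have h2Kpos : (0:ℝ) < 2 ^ K := by positivity
  have h2K : ((m:ℝ))^3 ≤ 2 ^ K := by
    have h1 : m ≤ 2 ^ Nat.clog 2 m := Nat.le_pow_clog one_lt_two m
    have h1' : (m:ℝ) ≤ 2 ^ Nat.clog 2 m := by exact_mod_cast h1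
    calc ((m:ℝ))^3 ≤ ((2:ℝ) ^ Nat.clog 2 m)^3 := by
          apply pow_le_pow_left₀ (by positivity) h1'
      _ = 2 ^ K := by rw [← pow_mul, hKdef, Nat.mul_comm]
  set E : Finset ι := U.filter (fun e => ψ < qstar e) with hEdef
  set q : ι → ℝ := fun e =>
    if ψ < qstar e ∨ qstar e < ψ / 2 ^ K then 0
    else 2 ^ (min (K - 1) (Nat.log 2 ⌊qstar e * 2 ^ K / ψ⌋₊)) * ψ / 2 ^ K with hqdef
  have hq_nonneg : ∀ e, 0 ≤ q e := by
    intro e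
    rw [hqdef]
    dsimp only
    split
    · exact le_rfl
    · positivity
  have hkey : ∀ e ∈ U, e ∉ E → q e ≤ qstar e ∧ qstar e ≤ 2 * q e + ψ / 2 ^ K := by
    intro e heU heE
    have hqe0 : 0 ≤ qstar e := hq0 e heU
    have hle : ¬ ψ < qstar e := by
      intro h
      exact heE (Finset.mem_filter.2 ⟨heU, h⟩)
    have hleψ : qstar e ≤ ψ := le_of_not_gt hle
    by_cases hsmall : qstar e < ψ / 2 ^ K
    · have hq : q e = 0 := by rw [hqdef]; exact if_pos (Or.inr hsmall)
      constructor
      · rw [hq]; exact hqe0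
      · rw [hq]; linarith
    · push_neg at hsmall
      have hq : q e = 2 ^ (min (K - 1) (Nat.log 2 ⌊qstar e * 2 ^ K / ψ⌋₊)) * ψ / 2 ^ K := by
        rw [hqdef]; exact if_neg (by push_neg; exact ⟨hleψ, hsmall⟩)
      set x := qstar e * 2 ^ K / ψ with hxdef
      have hxpos : 0 ≤ x := by positivity
      have hx1 : (1:ℝ) ≤ x := by
        rw [hxdef, le_div_iff₀ hψpos]
        rw [div_le_iff₀ h2Kpos] at hsmall
        linarith
      set n := ⌊x⌋₊ with hndef
      have hn1 : 1 ≤ n := Nat.le_floor (by exact_mod_cast hx1)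
      have hlow : (2:ℝ) ^ (Nat.log 2 n) ≤ x := by
        have h1 : (2:ℕ) ^ (Nat.log 2 n) ≤ n := Nat.pow_log_le_self 2 (by omega)
        have h2 : ((2:ℕ) ^ (Nat.log 2 n) : ℝ) ≤ (n:ℝ) := by exact_mod_cast h1
        have h3 : (n:ℝ) ≤ x := Nat.floor_le hxpos
        push_cast at h2
        linarith
      have hhigh : x < (2:ℝ) ^ (Nat.log 2 n + 1) := by
        have h1 : n < 2 ^ (Nat.log 2 n + 1) := Nat.lt_pow_succ_log_self one_lt_two n
        have h1' : n + 1 ≤ 2 ^ (Nat.log 2 n + 1) := h1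
        have h2 : ((n:ℝ) + 1) ≤ 2 ^ (Nat.log 2 n + 1) := by exact_mod_cast h1'
        have h3 : x < (n:ℝ) + 1 := Nat.lt_floor_add_one x
        linarith
      have hxq : qstar e = x * ψ / 2 ^ K := by
        rw [hxdef]
        field_simp
      constructor
      · rw [hq, hxq]
        have : (2:ℝ) ^ (min (K - 1) (Nat.log 2 n)) ≤ x :=
          le_trans (pow_le_pow_right₀ one_le_two (min_le_right _ _)) hlow
        have hmul : (2:ℝ) ^ (min (K - 1) (Nat.log 2 n)) * ψ ≤ x * ψ :=
          mul_le_mul_of_nonneg_right this (le_of_lt hψpos)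
        gcongr
      · have hx2 : x ≤ (2:ℝ) ^ (min (K - 1) (Nat.log 2 n) + 1) := by
          rcases le_or_gt (Nat.log 2 n) (K - 1) with h | h
          · rw [min_eq_right h]
            exact le_of_lt hhigh
          · rw [min_eq_left (le_of_lt h)]
            have hK1 : K - 1 + 1 = K := by omega
            rw [hK1]
            rw [hxdef, div_le_iff₀ hψpos]
            calc qstar e * 2 ^ K ≤ ψ * 2 ^ K := by nlinarith
              _ = (2:ℝ) ^ K * ψ := by ring
        rw [hq, hxq]
        have : x * ψ ≤ (2:ℝ) ^ (min (K - 1) (Nat.log 2 n) + 1) * ψ :=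
          mul_le_mul_of_nonneg_right hx2 (le_of_lt hψpos)
        have hdiv : x * ψ / 2 ^ K ≤ (2:ℝ) ^ (min (K - 1) (Nat.log 2 n) + 1) * ψ / 2 ^ K := by
          gcongr
        have hpow : (2:ℝ) ^ (min (K - 1) (Nat.log 2 n) + 1) = 2 * 2 ^ (min (K - 1) (Nat.log 2 n)) := by
          rw [pow_succ]; ring
        have hψK : 0 ≤ ψ / 2 ^ K := by positivity
        calc x * ψ / 2 ^ K ≤ (2:ℝ) ^ (min (K - 1) (Nat.log 2 n) + 1) * ψ / 2 ^ K := hdiv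
          _ = 2 * (2 ^ (min (K - 1) (Nat.log 2 n)) * ψ / 2 ^ K) := by rw [hpow]; ring
          _ ≤ 2 * (2 ^ (min (K - 1) (Nat.log 2 n)) * ψ / 2 ^ K) + ψ / 2 ^ K := by linarith
  have hq_mem : ∀ e ∈ U, q e ∈ candB m ψ := by
    intro e _
    rw [hqdef]
    dsimp only
    split
    · exact Set.mem_insert 0 _
    · refine Set.mem_insert_iff.2 (Or.inr ⟨min (K - 1) (Nat.log 2 ⌊qstar e * 2 ^ K / ψ⌋₊), ?_, ?_⟩)
      · calc min (K - 1) (Nat.log 2 ⌊qstar e * 2 ^ K / ψ⌋₊) ≤ K - 1 := min_le_left _ _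
          _ < K := by omega
      · rw [hKdef]
  set lam' : Finset ι → ℝ :=
    fun S => ∑ S' ∈ U.powerset.filter (fun S' => S' \ E = S), lam S' with hlam'def
  have hmaps : ∀ S' ∈ U.powerset, S' \ E ∈ U.powerset := by
    intro S' hS'
    rw [Finset.mem_powerset] at *
    exact (Finset.sdiff_subset).trans hS'
  have hsum : ∀ F : Finset ι → ℝ,
      ∑ S ∈ U.powerset, lam' S * F S = ∑ S' ∈ U.powerset, lam S' * F (S' \ E) := by
    intro F
    rw [← Finset.sum_fiberwise_of_maps_to hmaps (fun S' => lam S' * F (S' \ E))]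
    refine Finset.sum_congr rfl fun y _ => ?_
    rw [hlam'def]
    dsimp only
    rw [Finset.sum_mul]
    refine Finset.sum_congr rfl fun S' hS' => ?_
    rw [(Finset.mem_filter.1 hS').2]
  have hlam'0 : ∀ S, 0 ≤ lam' S := by
    intro S
    exact Finset.sum_nonneg fun S' _ => hlam0 S'
  have hlam'1 : ∑ S ∈ U.powerset, lam' S = 1 := by
    have := hsum (fun _ => 1)
    simpa using this.trans (by simpa using hlam1)
  refine ⟨lam', q, hlam'0, hlam'1, hq_mem, ?_⟩
  intro T hT
  set T' := T \ E with hT'def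
  have hT' : T' ⊆ U := (Finset.sdiff_subset).trans hT
  have key := hineq T' hT'
  rw [hsum (fun S => v (S \ T) - priceOf q S)]
  have hterm : ∀ S' ∈ U.powerset,
      lam S' * (v (S' \ T') - priceOf qstar S') ≤
        lam S' * (v ((S' \ E) \ T) - priceOf q (S' \ E)) := by
    intro S' hS'
    have hS'U : S' ⊆ U := Finset.mem_powerset.1 hS'
    refine mul_le_mul_of_nonneg_left ?_ (hlam0 S')
    have hsplit : priceOf qstar (S' ∩ E) + priceOf qstar (S' \ E) = priceOf qstar S' :=
      Finset.sum_inter_add_sum_sdiff S' E qstar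
    have hqle : priceOf q (S' \ E) ≤ priceOf qstar (S' \ E) := by
      refine Finset.sum_le_sum fun e he => ?_
      have heU : e ∈ U := hS'U (Finset.mem_sdiff.1 he).1
      exact (hkey e heU (Finset.mem_sdiff.1 he).2).1
    by_cases hSE : S' ∩ E = ∅
    · have hdisj : S' \ E = S' := by
        rw [Finset.sdiff_eq_self_iff_disjoint]
        exact Finset.disjoint_iff_inter_eq_empty.2 hSE
      have hTT : S' \ T' = S' \ T := by
        ext a
        simp only [hT'def, Finset.mem_sdiff]
        constructor
        · rintro ⟨haS, ha⟩
          refine ⟨haS, fun haT => ha ⟨haT, fun haE => ?_⟩⟩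
          exact (Finset.eq_empty_iff_forall_notMem.1 hSE a) (Finset.mem_inter.2 ⟨haS, haE⟩)
        · rintro ⟨haS, ha⟩
          exact ⟨haS, fun h => ha h.1⟩
      rw [hdisj] at hqle hsplit
      rw [hdisj, hTT]
      have hq0' : priceOf qstar (S' ∩ E) = 0 := by
        rw [hSE]; simp [priceOf]
      linarith
    · obtain ⟨e0, he0⟩ := Finset.nonempty_iff_ne_empty.2 hSE
      have he0U : e0 ∈ U := hS'U (Finset.mem_inter.1 he0).1
      have he0E : ψ < qstar e0 := (Finset.mem_filter.1 (Finset.mem_inter.1 he0).2).2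
      have hbig : ψ ≤ priceOf qstar (S' ∩ E) := by
        have h1 : qstar e0 ≤ ∑ e ∈ S' ∩ E, qstar e := by
          refine Finset.single_le_sum (fun e he => hq0 e (hS'U (Finset.mem_inter.1 he).1)) he0
        calc ψ ≤ qstar e0 := le_of_lt he0E
          _ ≤ priceOf qstar (S' ∩ E) := h1
      have hv1 : v (S' \ T') ≤ ψ := le_trans (hmono _ U ((Finset.sdiff_subset).trans hS'U)) hvU
      have hv2 : 0 ≤ v ((S' \ E) \ T) := hvnn _
      linarith
  have hstep2 : ∑ S' ∈ U.powerset, lam S' * (v (S' \ T') - priceOf qstar S') ≤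
      ∑ S' ∈ U.powerset, lam S' * (v ((S' \ E) \ T) - priceOf q (S' \ E)) :=
    Finset.sum_le_sum hterm
  have h4 : priceOf qstar T' ≤ 2 * priceOf q T + ψ / (m:ℝ) ^ 2 := by
    have hstep : priceOf qstar T' ≤ ∑ e ∈ T', (2 * q e + ψ / 2 ^ K) := by
      refine Finset.sum_le_sum fun e he => ?_
      have heU : e ∈ U := hT' he
      have heE : e ∉ E := (Finset.mem_sdiff.1 he).2
      exact (hkey e heU heE).2
    have hsplit : ∑ e ∈ T', (2 * q e + ψ / 2 ^ K) =
        2 * priceOf q T' + (T'.card : ℝ) * (ψ / 2 ^ K) := by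
      rw [Finset.sum_add_distrib, Finset.sum_const, ← Finset.mul_sum]
      simp [priceOf, nsmul_eq_mul]
    have hTT : priceOf q T' ≤ priceOf q T :=
      Finset.sum_le_sum_of_subset_of_nonneg Finset.sdiff_subset
        (fun e _ _ => hq_nonneg e)
    have hcard : (T'.card : ℝ) ≤ (m:ℝ) := by
      exact_mod_cast Finset.card_le_univ T'
    have hψdiv : ψ / 2 ^ K ≤ ψ / (m:ℝ) ^ 3 := by
      rw [div_le_div_iff₀ h2Kpos (by positivity)]
      nlinarith [le_of_lt hψpos, h2K]
    have hfinal : (m:ℝ) * (ψ / (m:ℝ) ^ 3) = ψ / (m:ℝ) ^ 2 := by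
      field_simp
    have h0 : (0:ℝ) ≤ ψ / 2 ^ K := by positivity
    have hcm : (T'.card : ℝ) * (ψ / 2 ^ K) ≤ (m:ℝ) * (ψ / (m:ℝ) ^ 3) := by
      apply mul_le_mul hcard hψdiv h0 (le_of_lt hmpos)
    calc priceOf qstar T' ≤ 2 * priceOf q T' + (T'.card : ℝ) * (ψ / 2 ^ K) := by
          rw [← hsplit]; exact hstep
      _ ≤ 2 * priceOf q T + ψ / (m:ℝ) ^ 2 := by
          rw [← hfinal]; linarith
  linarith
end

section
/- Let M be a finite set of items, U ⊆ M, v a monotone valuation on M with v(∅) = 0, α > 0 a real, λ a probability distribution over subsets of U, and q*_e ≥ 0 prices for e ∈ U such that for every T ⊆ U: Σ_{S⊆U} λ_S·(v(S \ T) − q*(S)) ≥ (1/α)·v(U) − q*(T). Then there exists a probability distribution λ' over subsets of U such that the same family of inequalities holds with λ' in place of λ, and additionally every nonempty set S with λ'_S > 0 satisfies q*_e ≤ v(U) for all e ∈ S. -/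
open Finset

/-- The support of the distribution from the price guarantee may be assumed to contain
only sets whose items all have intended price at most `v U`: there is a probability
distribution `lam'` over subsets of `U` satisfying the same family of inequalities such
that every nonempty `S ⊆ U` with `lam' S > 0` has `qstar e ≤ v U` for all `e ∈ S`. -/
theorem price_guarantee_support_bounded
    {ι : Type} [Fintype ι] [DecidableEq ι]
    (v : Finset ι → ℝ) (U : Finset ι) (α : ℝ)
    (hv0 : v ∅ = 0)
    (hmono : ∀ S T : Finset ι, S ⊆ T → v S ≤ v T)
    (hα : 0 < α)
    (lam : Finset ι → ℝ) (qstar : ι → ℝ)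
    (hlam0 : ∀ S, 0 ≤ lam S) (hlam1 : ∑ S ∈ U.powerset, lam S = 1)
    (hq0 : ∀ e ∈ U, 0 ≤ qstar e)
    (hineq : ∀ T ⊆ U, (1 / α) * v U - priceOf qstar T ≤
      ∑ S ∈ U.powerset, lam S * (v (S \ T) - priceOf qstar S)) :
    ∃ lam' : Finset ι → ℝ,
      (∀ S, 0 ≤ lam' S) ∧ (∑ S ∈ U.powerset, lam' S = 1) ∧
      (∀ T ⊆ U, (1 / α) * v U - priceOf qstar T ≤
        ∑ S ∈ U.powerset, lam' S * (v (S \ T) - priceOf qstar S)) ∧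
      ∀ S ⊆ U, S ≠ ∅ → 0 < lam' S → ∀ e ∈ S, qstar e ≤ v U := by
  classical
  set B : Finset ι := U.filter (fun e => qstar e ≤ v U) with hB
  have vnn : ∀ X : Finset ι, 0 ≤ v X := fun X => hv0 ▸ hmono ∅ X (empty_subset X)
  have hmaps : ∀ S ∈ U.powerset, S ∩ B ∈ U.powerset := by
    intro S hS
    simp only [mem_powerset] at hS ⊢
    exact (inter_subset_left).trans hS
  -- key pointwise inequality
  have key : ∀ S ⊆ U, ∀ T : Finset ι,
      v (S \ T) - priceOf qstar S ≤ v ((S ∩ B) \ T) - priceOf qstar (S ∩ B) := by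
    intro S hSU T
    by_cases hsub : S ⊆ B
    · rw [inter_eq_left.mpr hsub]
    · obtain ⟨e₀, he₀S, he₀B⟩ := not_subset.mp hsub
      have he₀U : e₀ ∈ U := hSU he₀S
      have he₀q : v U < qstar e₀ := by
        by_contra h
        exact he₀B (mem_filter.mpr ⟨he₀U, le_of_not_gt h⟩)
      have hprice : priceOf qstar S = priceOf qstar (S ∩ B) + priceOf qstar (S \ B) := by
        unfold priceOf
        rw [← Finset.sum_union (Finset.disjoint_sdiff_inter S B).symm]
        congr 1
        ext x; simp [Finset.mem_inter, Finset.mem_sdiff, Finset.mem_union]; tauto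
      have hdiffnn : v U ≤ priceOf qstar (S \ B) := by
        have he₀ : e₀ ∈ S \ B := mem_sdiff.mpr ⟨he₀S, he₀B⟩
        have : qstar e₀ ≤ priceOf qstar (S \ B) := by
          unfold priceOf
          refine Finset.single_le_sum (fun e he => hq0 e (hSU (mem_sdiff.mp he).1)) he₀
        linarith
      have hvle : v (S \ T) ≤ v U := hmono _ _ ((sdiff_subset).trans hSU)
      have := vnn ((S ∩ B) \ T)
      linarith
  refine ⟨fun T' => ∑ S ∈ U.powerset.filter (fun S => S ∩ B = T'), lam S, ?_, ?_, ?_, ?_⟩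
  · intro S; exact Finset.sum_nonneg fun S _ => hlam0 S
  · rw [Finset.sum_fiberwise_of_maps_to hmaps, hlam1]
  · intro T hT
    have h1 : ∑ T' ∈ U.powerset,
        (∑ S ∈ U.powerset.filter (fun S => S ∩ B = T'), lam S) *
          (v (T' \ T) - priceOf qstar T')
        = ∑ S ∈ U.powerset, lam S * (v ((S ∩ B) \ T) - priceOf qstar (S ∩ B)) := by
      rw [← Finset.sum_fiberwise_of_maps_to hmaps
        (fun S => lam S * (v ((S ∩ B) \ T) - priceOf qstar (S ∩ B)))]
      refine Finset.sum_congr rfl fun T' hT' => ?_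
      rw [Finset.sum_mul]
      refine Finset.sum_congr rfl fun S hS => ?_
      rw [(Finset.mem_filter.mp hS).2]
    rw [h1]
    refine le_trans (hineq T hT) (Finset.sum_le_sum fun S hS => ?_)
    exact mul_le_mul_of_nonneg_left (key S (mem_powerset.mp hS) T) (hlam0 S)
  · intro S hSU hSne hpos e heS
    obtain ⟨S', hS', hlamS'⟩ : ∃ S' ∈ U.powerset.filter (fun S' => S' ∩ B = S), 0 < lam S' := by
      by_contra h
      push_neg at h
      have : ∑ S' ∈ U.powerset.filter (fun S' => S' ∩ B = S), lam S' ≤ 0 :=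
        Finset.sum_nonpos fun S' hS' => h S' hS'
      linarith
    have hSB : S ⊆ B := by
      rw [← (Finset.mem_filter.mp hS').2]
      exact inter_subset_right
    exact (Finset.mem_filter.mp (hSB heS)).2
end
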